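/- arXiv:2512.09794 — 2 statements merged into one kernel-verified Lean document; each statement's English description precedes it below -/
import Mathlib

section
/- Let N ≥ 1, r > 1, and let u : ℝ^N → ℝ be a C¹ function such that the function x ↦ |∇u(x)| |x| belongs to L^r(ℝ^N). Then for every λ > 1, ∫_{ℝ^N} |u(λx) - u(x)|^r / (λ-1)^r dx ≤ C(N,r) ∫_{ℝ^N} |∇u(y)|^r |y|^r dy, where C(N,r) = 1/(N+r-1) · sup_{λ>1} (1 - λ^{-(N+r-1)})/(λ-1) can be taken as a constant depending only on N and r. -/
open MeasureTheory
open scoped ENNReal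

theorem stmt3 (N : ℕ) (hN : 1 ≤ N) (r : ℝ) (hr : 1 < r) :
    ∃ C > 0, ∀ u : EuclideanSpace ℝ (Fin N) → ℝ, ContDiff ℝ 1 u →
      MemLp (fun x => ‖fderiv ℝ u x‖ * ‖x‖) (ENNReal.ofReal r) volume →
      ∀ l : ℝ, 1 < l →
        (∫⁻ x, ENNReal.ofReal (|u (l • x) - u x| ^ r / (l - 1) ^ r)) ≤
          ENNReal.ofReal (C * ∫ y, ‖fderiv ℝ u y‖ ^ r * ‖y‖ ^ r) := by
  refine ⟨1, one_pos, ?_⟩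
  intro u hu hmem l hl
  have hr0 : (0:ℝ) < r := zero_lt_one.trans hr
  have hl1 : (0:ℝ) < l - 1 := by linarith
  set g : EuclideanSpace ℝ (Fin N) → ℝ := fun y => ‖fderiv ℝ u y‖ * ‖y‖ with hgdef
  have hgc : Continuous g := (hu.continuous_fderiv one_ne_zero).norm.mul continuous_norm
  have hg0 : ∀ y, 0 ≤ g y := fun y => mul_nonneg (norm_nonneg _) (norm_nonneg _)
  have hFmeas : Measurable fun y : EuclideanSpace ℝ (Fin N) => ENNReal.ofReal (g y ^ r) :=
    ((hgc.rpow_const fun _ => Or.inr hr0.le).measurable).ennreal_ofReal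
  -- integrability of g ^ r
  have hint : Integrable (fun y => g y ^ r) := by
    have h1 : (ENNReal.ofReal r) ≠ 0 := by
      simp [ENNReal.ofReal_eq_zero, not_le, hr0]
    have h2 := hmem.integrable_norm_rpow h1 ENNReal.ofReal_ne_top
    rw [ENNReal.toReal_ofReal hr0.le] at h2
    refine h2.congr (Filter.Eventually.of_forall fun y => ?_)
    simp only [Real.norm_eq_abs, abs_of_nonneg (hg0 y)]
  set I : ℝ≥0∞ := ∫⁻ y, ENNReal.ofReal (g y ^ r) with hIdef
  have hIeq : ENNReal.ofReal (∫ y, g y ^ r) = I :=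
    ofReal_integral_eq_lintegral_ofReal hint
      (Filter.Eventually.of_forall fun y => Real.rpow_nonneg (hg0 y) r)
  have hudiff := hu.differentiable one_ne_zero
  have hcont : ∀ x : EuclideanSpace ℝ (Fin N),
      Continuous fun t : ℝ => (fderiv ℝ u (t • x)) x := fun x =>
    ((hu.continuous_fderiv one_ne_zero).comp (continuous_id.smul continuous_const)).clm_apply
      continuous_const
  -- FTC
  have hftc : ∀ x : EuclideanSpace ℝ (Fin N),
      u (l • x) - u x = ∫ t in (1:ℝ)..l, (fderiv ℝ u (t • x)) x := by
    intro x
    have h := intervalIntegral.integral_eq_sub_of_hasDerivAt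
      (f := fun t : ℝ => u (t • x)) (f' := fun t : ℝ => (fderiv ℝ u (t • x)) x)
      (a := 1) (b := l) ?_ ((hcont x).intervalIntegrable 1 l)
    · simp only [one_smul] at h
      exact h.symm
    · intro t _
      have h1 : HasDerivAt (fun s : ℝ => s • x) x t := by
        simpa using (hasDerivAt_id t).smul_const x
      exact ((hudiff (t • x)).hasFDerivAt).comp_hasDerivAt t h1
  -- pointwise bound by an interval integral of g
  have hbound : ∀ x : EuclideanSpace ℝ (Fin N),
      |u (l • x) - u x| ≤ ∫ t in (1:ℝ)..l, g (t • x) := by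
    intro x
    rw [hftc x]
    have hgi : IntervalIntegrable (fun t : ℝ => g (t • x)) volume 1 l :=
      (hgc.comp (continuous_id.smul continuous_const)).intervalIntegrable 1 l
    refine (intervalIntegral.abs_integral_le_integral_abs hl.le).trans ?_
    refine intervalIntegral.integral_mono_on hl.le
      ((hcont x).abs.intervalIntegrable 1 l) hgi ?_
    intro t ht
    calc |(fderiv ℝ u (t • x)) x| = ‖(fderiv ℝ u (t • x)) x‖ := (Real.norm_eq_abs _).symm
      _ ≤ ‖fderiv ℝ u (t • x)‖ * ‖x‖ := (fderiv ℝ u (t • x)).le_opNorm x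
      _ ≤ ‖fderiv ℝ u (t • x)‖ * ‖t • x‖ := by
          have hx : ‖x‖ ≤ ‖t • x‖ := by
            rw [norm_smul, Real.norm_eq_abs]
            exact le_mul_of_one_le_left (norm_nonneg x) (le_trans ht.1 (le_abs_self t))
          exact mul_le_mul_of_nonneg_left hx (norm_nonneg _)
  -- conjugate exponent
  set q := Real.conjExponent r with hqdef
  have hpq : r.HolderConjugate q := Real.HolderConjugate.conjExponent hr
  set b : ℝ≥0∞ := ENNReal.ofReal (l - 1) with hbdef
  have hb0 : b ≠ 0 := by
    simp only [hbdef, ne_eq, ENNReal.ofReal_eq_zero, not_le]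
    linarith
  have hbtop : b ≠ ⊤ := ENNReal.ofReal_ne_top
  set B : EuclideanSpace ℝ (Fin N) → ℝ≥0∞ :=
    fun x => ∫⁻ t in Set.Ioc 1 l, ENNReal.ofReal (g (t • x) ^ r) with hBdef
  -- pointwise Jensen
  have hpoint : ∀ x : EuclideanSpace ℝ (Fin N),
      ENNReal.ofReal (|u (l • x) - u x| ^ r) ≤ b ^ (r - 1) * B x := by
    intro x
    have hA : ENNReal.ofReal (∫ t in (1:ℝ)..l, g (t • x)) =
        ∫⁻ t in Set.Ioc 1 l, ENNReal.ofReal (g (t • x)) := by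
      rw [intervalIntegral.integral_of_le hl.le]
      exact ofReal_integral_eq_lintegral_ofReal
        ((hgc.comp (continuous_id.smul continuous_const)).integrableOn_Ioc)
        (Filter.Eventually.of_forall fun t => hg0 _)
    have hfm : AEMeasurable (fun t : ℝ => ENNReal.ofReal (g (t • x)))
        (volume.restrict (Set.Ioc 1 l)) :=
      ((hgc.comp (continuous_id.smul continuous_const)).measurable.ennreal_ofReal).aemeasurable
    have hH := ENNReal.lintegral_mul_le_Lp_mul_Lq (volume.restrict (Set.Ioc 1 l)) hpq hfm
      (aemeasurable_const (b := (1:ℝ≥0∞)))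
    simp only [Pi.mul_apply, mul_one, ENNReal.one_rpow, lintegral_const,
      Measure.restrict_apply_univ, Real.volume_Ioc, one_mul] at hH
    have hBx : (∫⁻ t in Set.Ioc 1 l, ENNReal.ofReal (g (t • x)) ^ r) = B x := by
      refine lintegral_congr fun t => ?_
      rw [ENNReal.ofReal_rpow_of_nonneg (hg0 _) hr0.le]
    rw [hBx] at hH
    have hHr := ENNReal.rpow_le_rpow hH hr0.le
    rw [ENNReal.mul_rpow_of_nonneg _ _ hr0.le, ← ENNReal.rpow_mul, ← ENNReal.rpow_mul,
      one_div, inv_mul_cancel₀ hr0.ne', ENNReal.rpow_one] at hHr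
    have hq1 : 1 / q * r = r - 1 := by
      rw [one_div, mul_comm, ← div_eq_mul_inv]
      exact hpq.div_conj_eq_sub_one
    rw [hq1] at hHr
    calc ENNReal.ofReal (|u (l • x) - u x| ^ r)
        = ENNReal.ofReal (|u (l • x) - u x|) ^ r :=
          (ENNReal.ofReal_rpow_of_nonneg (abs_nonneg _) hr0.le).symm
      _ ≤ ENNReal.ofReal (∫ t in (1:ℝ)..l, g (t • x)) ^ r :=
          ENNReal.rpow_le_rpow (ENNReal.ofReal_le_ofReal (hbound x)) hr0.le
      _ = (∫⁻ t in Set.Ioc 1 l, ENNReal.ofReal (g (t • x))) ^ r := by rw [hA]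
      _ ≤ B x * b ^ (r - 1) := hHr
      _ = b ^ (r - 1) * B x := mul_comm _ _
  -- Tonelli + change of variables
  have hswap : (∫⁻ x, B x) ≤ b * I := by
    have hmeas2 : Measurable (Function.uncurry
        fun (x : EuclideanSpace ℝ (Fin N)) (t : ℝ) => ENNReal.ofReal (g (t • x) ^ r)) := by
      exact hFmeas.comp (continuous_snd.smul continuous_fst).measurable
    rw [hBdef, lintegral_lintegral_swap hmeas2.aemeasurable]
    calc (∫⁻ t in Set.Ioc 1 l, ∫⁻ x, ENNReal.ofReal (g (t • x) ^ r))
        ≤ ∫⁻ _ in Set.Ioc 1 l, I := by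
          refine setLIntegral_mono measurable_const fun t ht => ?_
          have ht0 : t ≠ 0 := by
            have := ht.1; intro h; rw [h] at this; linarith
          have hmap : (∫⁻ x, ENNReal.ofReal (g (t • x) ^ r)) =
              ENNReal.ofReal |((t : ℝ) ^
                Module.finrank ℝ (EuclideanSpace ℝ (Fin N)))⁻¹| * I := by
            have h1 := lintegral_map (μ := volume) (g := fun x : EuclideanSpace ℝ (Fin N) => t • x)
              hFmeas (measurable_id.const_smul t)
            rw [Measure.map_addHaar_smul volume ht0, lintegral_smul_measure] at h1
            exact h1.symm
          rw [hmap]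
          have hc : ENNReal.ofReal |((t : ℝ) ^
              Module.finrank ℝ (EuclideanSpace ℝ (Fin N)))⁻¹| ≤ 1 := by
            rw [ENNReal.ofReal_le_one]
            have ht1 : (1:ℝ) ≤ t ^ Module.finrank ℝ (EuclideanSpace ℝ (Fin N)) :=
              one_le_pow₀ ht.1.le
            rw [abs_of_nonneg (inv_nonneg.2 (by positivity))]
            exact inv_le_one_of_one_le₀ ht1
          calc ENNReal.ofReal |((t : ℝ) ^
                Module.finrank ℝ (EuclideanSpace ℝ (Fin N)))⁻¹| * I ≤ 1 * I :=
                mul_le_mul' hc le_rfl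
            _ = I := one_mul I
      _ = b * I := by
          rw [setLIntegral_const, Real.volume_Ioc, mul_comm]
  -- final assembly
  have hdiv : (∫⁻ x, ENNReal.ofReal (|u (l • x) - u x| ^ r / (l - 1) ^ r)) =
      (∫⁻ x, ENNReal.ofReal (|u (l • x) - u x| ^ r)) * (b ^ r)⁻¹ := by
    rw [← lintegral_mul_const' ((b ^ r)⁻¹) _
      (by simp [ENNReal.inv_ne_top, (ENNReal.rpow_pos (by simpa [hbdef, pos_iff_ne_zero] using hb0) hbtop).ne'])]
    refine lintegral_congr fun x => ?_
    rw [ENNReal.ofReal_div_of_pos (Real.rpow_pos_of_pos hl1 r), div_eq_mul_inv,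
      hbdef, ← ENNReal.ofReal_rpow_of_nonneg hl1.le hr0.le]
  have hbr0 : b ^ r ≠ 0 := (ENNReal.rpow_pos (by simpa [pos_iff_ne_zero] using hb0) hbtop).ne'
  have hbrtop : b ^ r ≠ ⊤ := by
    exact ENNReal.rpow_ne_top_of_nonneg hr0.le hbtop
  calc (∫⁻ x, ENNReal.ofReal (|u (l • x) - u x| ^ r / (l - 1) ^ r))
      = (∫⁻ x, ENNReal.ofReal (|u (l • x) - u x| ^ r)) * (b ^ r)⁻¹ := hdiv
    _ ≤ (∫⁻ x, b ^ (r - 1) * B x) * (b ^ r)⁻¹ := by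
        exact mul_le_mul' (lintegral_mono fun x => hpoint x) le_rfl
    _ = (b ^ (r - 1) * ∫⁻ x, B x) * (b ^ r)⁻¹ := by
        rw [lintegral_const_mul' _ _ (ENNReal.rpow_ne_top_of_nonneg (by linarith) hbtop)]
    _ ≤ (b ^ (r - 1) * (b * I)) * (b ^ r)⁻¹ := by
        exact mul_le_mul' (mul_le_mul' le_rfl hswap) le_rfl
    _ = (b ^ (r - 1) * b ^ (1:ℝ) * (b ^ r)⁻¹) * I := by
        rw [ENNReal.rpow_one]; ring
    _ = (b ^ r * (b ^ r)⁻¹) * I := by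
        rw [← ENNReal.rpow_add _ _ hb0 hbtop, sub_add_cancel]
    _ = I := by rw [ENNReal.mul_inv_cancel hbr0 hbrtop, one_mul]
    _ = ENNReal.ofReal (1 * ∫ y, ‖fderiv ℝ u y‖ ^ r * ‖y‖ ^ r) := by
        rw [one_mul, show (∫ y, ‖fderiv ℝ u y‖ ^ r * ‖y‖ ^ r) = ∫ y, g y ^ r from
          integral_congr_ae (Filter.Eventually.of_forall fun y =>
            (Real.mul_rpow (norm_nonneg _) (norm_nonneg _)).symm), hIeq]
end

section
/- Let E be a uniformly convex Banach space, p > 1, r > 0, and A ∈ C¹(E, ℝ) (identified with its derivative A' : E → E*) such that ⟨A(u), v⟩ ≤ r ‖u‖^{p-1} ‖v‖ and ⟨A(u), u⟩ = r ‖u‖^p for all u, v ∈ E. If u_n ⇀ u weakly in E and ⟨A(u_n), u_n - u⟩ → 0, then u_n → u strongly in E. -/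
open Filter

/-- The (S)-property for `p`-homogeneous potential operators on uniformly convex spaces. -/
theorem stmt12 (E : Type*) [NormedAddCommGroup E] [NormedSpace ℝ E] [CompleteSpace E]
    [UniformConvexSpace E] (p r : ℝ) (hp : 1 < p) (hr : 0 < r)
    (A : E → (E →L[ℝ] ℝ))
    (hpot : ∃ J : E → ℝ, ∀ w : E, HasFDerivAt J (A w) w)
    (h1 : ∀ w v : E, A w v ≤ r * ‖w‖ ^ (p - 1) * ‖v‖)
    (h2 : ∀ w : E, A w w = r * ‖w‖ ^ p)
    (u : ℕ → E) (x : E)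
    (hweak : ∀ f : E →L[ℝ] ℝ, Tendsto (fun n => f (u n)) atTop (nhds (f x)))
    (hA : Tendsto (fun n => A (u n) (u n - x)) atTop (nhds 0)) :
    Tendsto u atTop (nhds x) := by
  -- Key pointwise estimate
  have key : ∀ n, r * ‖u n‖ ^ (p - 1) * (‖u n‖ - ‖x‖) ≤ A (u n) (u n - x) := by
    intro n
    have hx1 := h1 (u n) x
    have hpow : ‖u n‖ ^ p = ‖u n‖ ^ (p - 1) * ‖u n‖ := by
      rcases eq_or_ne ‖u n‖ 0 with h | h
      · rw [h, Real.zero_rpow (by linarith : p ≠ 0), mul_zero]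
      · rw [← Real.rpow_add_one h (p - 1)]; ring_nf
    calc r * ‖u n‖ ^ (p - 1) * (‖u n‖ - ‖x‖)
        = r * (‖u n‖ ^ (p - 1) * ‖u n‖) - r * ‖u n‖ ^ (p - 1) * ‖x‖ := by ring
      _ = r * ‖u n‖ ^ p - r * ‖u n‖ ^ (p - 1) * ‖x‖ := by rw [hpow]
      _ ≤ r * ‖u n‖ ^ p - A (u n) x := by linarith
      _ = A (u n) (u n) - A (u n) x := by rw [h2]
      _ = A (u n) (u n - x) := (map_sub _ _ _).symm
  -- Step 1: norm convergence
  have hnorm : Tendsto (fun n => ‖u n‖) atTop (nhds ‖x‖) := by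
    rw [tendsto_order]
    constructor
    · intro b hb
      rcases eq_or_ne x 0 with rfl | hx
      · simp only [norm_zero] at hb
        filter_upwards with n
        exact lt_of_lt_of_le hb (norm_nonneg _)
      · obtain ⟨f, hf1, hfx⟩ := exists_dual_vector ℝ x (norm_ne_zero_iff.2 hx)
        have hfu : Tendsto (fun n => f (u n)) atTop (nhds ‖x‖) := by
          simpa [hfx] using hweak f
        filter_upwards [hfu.eventually (lt_mem_nhds hb)] with n hn
        have : f (u n) ≤ ‖u n‖ := by
          calc f (u n) ≤ ‖f (u n)‖ := le_abs_self _
            _ ≤ ‖f‖ * ‖u n‖ := f.le_opNorm _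
            _ = ‖u n‖ := by rw [hf1, one_mul]
        linarith
    · intro b hb
      set ε₀ : ℝ := b - ‖x‖ with hε₀def
      have hε₀ : 0 < ε₀ := by simp [hε₀def]; linarith
      have hpos : (0 : ℝ) < r * ε₀ ^ p := mul_pos hr (Real.rpow_pos_of_pos hε₀ p)
      filter_upwards [hA.eventually (gt_mem_nhds hpos)] with n hn
      by_contra h
      push_neg at h
      have h4 : ε₀ ≤ ‖u n‖ := by
        have := norm_nonneg x; linarith
      have h5 : ε₀ ^ (p - 1) ≤ ‖u n‖ ^ (p - 1) :=
        Real.rpow_le_rpow hε₀.le h4 (by linarith)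
      have h6 : ε₀ ^ (p - 1) * ε₀ = ε₀ ^ p := by
        rw [← Real.rpow_add_one hε₀.ne' (p - 1)]; ring_nf
      have h7 : r * ε₀ ^ p ≤ r * ‖u n‖ ^ (p - 1) * (‖u n‖ - ‖x‖) := by
        rw [← h6]
        have hb' : ε₀ ≤ ‖u n‖ - ‖x‖ := by linarith
        have hnn : (0:ℝ) ≤ ε₀ ^ (p - 1) := Real.rpow_nonneg hε₀.le _
        have hm : ε₀ ^ (p - 1) * ε₀ ≤ ‖u n‖ ^ (p - 1) * (‖u n‖ - ‖x‖) :=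
          mul_le_mul h5 hb' hε₀.le (Real.rpow_nonneg (norm_nonneg _) _)
        calc r * (ε₀ ^ (p - 1) * ε₀) ≤ r * (‖u n‖ ^ (p - 1) * (‖u n‖ - ‖x‖)) :=
              mul_le_mul_of_nonneg_left hm hr.le
          _ = r * ‖u n‖ ^ (p - 1) * (‖u n‖ - ‖x‖) := by ring
      linarith [key n]
  -- Step 2: Radon–Riesz via uniform convexity
  rcases eq_or_ne x 0 with rfl | hx
  · rw [tendsto_zero_iff_norm_tendsto_zero]
    simpa using hnorm
  · have hxpos : 0 < ‖x‖ := norm_pos_iff.2 hx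
    obtain ⟨f, hf1, hfx⟩ := exists_dual_vector ℝ x (norm_ne_zero_iff.2 hx)
    have hfu : Tendsto (fun n => f (u n)) atTop (nhds ‖x‖) := by
      simpa [hfx] using hweak f
    rw [Metric.tendsto_nhds]
    intro ε hε
    simp only [dist_eq_norm]
    obtain ⟨δ, hδ, hcon⟩ :=
      exists_forall_closed_ball_dist_add_le_two_mul_sub E (half_pos hε) ‖x‖
    have e1 : ∀ᶠ n in atTop, ‖x‖ / 2 < ‖u n‖ :=
      hnorm.eventually (lt_mem_nhds (by linarith))
    have e2 : ∀ᶠ n in atTop, |‖u n‖ - ‖x‖| < ε / 2 := by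
      have := Metric.tendsto_nhds.1 hnorm (ε / 2) (half_pos hε)
      simpa [Real.dist_eq] using this
    have ht : Tendsto (fun n => ‖x‖ / ‖u n‖ * f (u n) + ‖x‖) atTop (nhds (2 * ‖x‖)) := by
      have hdiv : Tendsto (fun n => ‖x‖ / ‖u n‖) atTop (nhds (‖x‖ / ‖x‖)) :=
        Tendsto.div (tendsto_const_nhds (x := ‖x‖) (f := atTop)) hnorm hxpos.ne'
      have := (hdiv.mul hfu).add_const ‖x‖
      rw [div_self hxpos.ne', one_mul] at this
      convert this using 2
      ring
    have e3 : ∀ᶠ n in atTop, 2 * ‖x‖ - δ < ‖x‖ / ‖u n‖ * f (u n) + ‖x‖ :=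
      ht.eventually (lt_mem_nhds (by linarith))
    filter_upwards [e1, e2, e3] with n h1n h2n h3n
    have hun : 0 < ‖u n‖ := lt_of_le_of_lt (by linarith) h1n
    set c : ℝ := ‖x‖ / ‖u n‖ with hc
    have hcpos : 0 < c := div_pos hxpos hun
    set v : E := c • u n with hv
    have hvnorm : ‖v‖ = ‖x‖ := by
      rw [hv, norm_smul, Real.norm_eq_abs, abs_of_pos hcpos, hc,
        div_mul_cancel₀ _ hun.ne']
    have hvdist : ‖v - u n‖ = |‖x‖ - ‖u n‖| := by
      have : v - u n = (c - 1) • u n := by rw [hv, sub_smul, one_smul]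
      rw [this, norm_smul, Real.norm_eq_abs, hc]
      rw [show ‖x‖ / ‖u n‖ - 1 = (‖x‖ - ‖u n‖) / ‖u n‖ by field_simp]
      rw [abs_div, abs_of_pos hun, div_mul_cancel₀ _ hun.ne']
    have hclaim : ‖v - x‖ < ε / 2 := by
      by_contra hcl
      push_neg at hcl
      have hb1 : ‖v + x‖ ≤ 2 * ‖x‖ - δ := hcon hvnorm.le le_rfl hcl
      have hb2 : f (v + x) = c * f (u n) + ‖x‖ := by
        rw [map_add, hv, map_smul, smul_eq_mul]
        simp [hfx]
      have hb3 : f (v + x) ≤ ‖v + x‖ := by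
        calc f (v + x) ≤ ‖f (v + x)‖ := le_abs_self _
          _ ≤ ‖f‖ * ‖v + x‖ := f.le_opNorm _
          _ = ‖v + x‖ := by rw [hf1, one_mul]
      rw [hb2] at hb3
      linarith
    calc ‖u n - x‖ ≤ ‖u n - v‖ + ‖v - x‖ := norm_sub_le_norm_sub_add_norm_sub _ _ _
      _ = |‖x‖ - ‖u n‖| + ‖v - x‖ := by rw [norm_sub_rev, hvdist]
      _ < ε / 2 + ε / 2 := by rw [abs_sub_comm] at h2n; linarith
      _ = ε := by ring
end
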